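/- Let x be an infinite word having only finitely many abelian unbordered factors. Then x has bounded abelian complexity: there exists N such that for every n ≥ 1, the number of abelian equivalence classes of factors of x of length n is at most N. -/

import Mathlib

def factor {α : Type*} (w : ℕ → α) (i n : ℕ) : List α :=
  (List.range n).map (fun k => w (i + k))

def IsFactor {α : Type*} (u : List α) (w : ℕ → α) : Prop :=
  ∃ i, factor w i u.length = u

def AbelianEquiv {α : Type*} [DecidableEq α] (u v : List α) : Prop :=
  ∀ a : α, u.count a = v.count a

def AbelianBordered {α : Type*} [DecidableEq α] (u : List α) : Prop :=
  ∃ p s : List α, p <+: u ∧ s <:+ u ∧ p ≠ [] ∧ p.length < u.length ∧ AbelianEquiv p s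

/-- The set of Parikh vectors of factors of `x` of length `n`. -/
def ParikhVectors {α : Type*} [DecidableEq α] (x : ℕ → α) (n : ℕ) : Set (α → ℕ) :=
  {f | ∃ u : List α, IsFactor u x ∧ u.length = n ∧ ∀ a, u.count a = f a}

/-!
Let `L` exceed the length of every abelian unbordered factor. Every factor `x[i, i + n)` with
`L ≤ n` then has an abelian border of some length `0 < k < n`; in terms of the
Parikh vectors `P m` of the prefixes of `x` this reads `P (i + k) + P (i + n - k) = P i + P (i + n)`.
Iterating, every pair `u, v` can be moved along its antidiagonal `m + m' = u + v` to a pair at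
distance `< L` without changing `P u + P v`. Two such close pairs on the same antidiagonal are
themselves close, and counting letters is `1`-Lipschitz in the prefix length, so all factors of
length `n` have Parikh vectors within `L` of that of the prefix of length `n`: `x` is balanced.
-/

section

variable {α : Type*}

@[simp]
lemma factor_length (x : ℕ → α) (i n : ℕ) : (factor x i n).length = n := by
  simp [factor]

lemma factor_add (x : ℕ → α) (i n m : ℕ) :
    factor x i (n + m) = factor x i n ++ factor x (i + n) m := by
  simp only [factor, List.range_add, List.map_append, List.map_map, Function.comp_def, add_assoc]

lemma factor_take (x : ℕ → α) {k n : ℕ} (i : ℕ) (hk : k ≤ n) :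
    (factor x i n).take k = factor x i k := by
  rw [← Nat.add_sub_cancel' hk, factor_add, List.take_left' (factor_length x i k)]

lemma factor_drop (x : ℕ → α) {k n : ℕ} (i : ℕ) (hk : k ≤ n) :
    (factor x i n).drop k = factor x (i + k) (n - k) := by
  rw [← Nat.add_sub_cancel' hk, factor_add, List.drop_left' (factor_length x i k),
    Nat.add_sub_cancel_left]

lemma isFactor_factor (x : ℕ → α) (i n : ℕ) : IsFactor (factor x i n) x :=
  ⟨i, by rw [factor_length]⟩

def prefixMultiset (x : ℕ → α) (m : ℕ) : Multiset α := factor x 0 m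

lemma prefixMultiset_add (x : ℕ → α) (i n : ℕ) :
    prefixMultiset x (i + n) = prefixMultiset x i + factor x i n := by
  simp only [prefixMultiset, factor_add, zero_add, Multiset.coe_add]

lemma AbelianEquiv.perm [DecidableEq α] {u v : List α} (h : AbelianEquiv u v) :
    u.Perm v :=
  List.perm_iff_count.mpr h

lemma exists_forall_abelianBordered_factor [DecidableEq α] {x : ℕ → α}
    (h : {u : List α | IsFactor u x ∧ ¬ AbelianBordered u}.Finite) :
    ∃ L, ∀ i n, L ≤ n → AbelianBordered (factor x i n) := by
  obtain ⟨B, hB⟩ := (h.image List.length).bddAbove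
  refine ⟨B + 1, fun i n hn => ?_⟩
  by_contra hnb
  have := hB ⟨factor x i n, ⟨isFactor_factor x i n, hnb⟩, rfl⟩
  simp only [factor_length] at this
  omega

lemma exists_prefixMultiset_add_eq_of_abelianBordered [DecidableEq α] {x : ℕ → α}
    {i n : ℕ} (hb : AbelianBordered (factor x i n)) :
    ∃ k, 0 < k ∧ k < n ∧ prefixMultiset x (i + k) + prefixMultiset x (i + (n - k)) =
      prefixMultiset x i + prefixMultiset x (i + n) := by
  obtain ⟨p, s, hp, hs, hp0, hpn, hps⟩ := hb
  rw [factor_length] at hpn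
  have hlen : s.length = p.length := hps.perm.length_eq.symm
  have hp' : p = factor x i p.length :=
    (List.prefix_iff_eq_take.mp hp).trans (factor_take x i hpn.le)
  have hs' : s = factor x (i + (n - p.length)) p.length := by
    rw [List.suffix_iff_eq_drop.mp hs, factor_length, hlen, factor_drop x i (Nat.sub_le _ _),
      Nat.sub_sub_self hpn.le]
  have hsum : prefixMultiset x (i + n) = prefixMultiset x (i + (n - p.length)) + s := by
    rw [hs', ← prefixMultiset_add, add_assoc, Nat.sub_add_cancel hpn.le]
  refine ⟨p.length, List.length_pos_iff.mpr hp0, hpn, ?_⟩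
  rw [prefixMultiset_add, ← hp', hsum, Multiset.coe_eq_coe.mpr hps.perm]
  abel

lemma exists_close_pair_add_eq {M : Type*} [AddCommMonoid M] {P : ℕ → M} {L : ℕ}
    (hP : ∀ i n, L ≤ n → ∃ k, 0 < k ∧ k < n ∧ P (i + k) + P (i + (n - k)) = P i + P (i + n))
    (u v : ℕ) :
    ∃ m m', m ≤ m' ∧ m' < m + L ∧ m + m' = u + v ∧ P m + P m' = P u + P v := by
  wlog huv : u ≤ v generalizing u v
  · obtain ⟨m, m', h⟩ := this v u (by omega)
    exact ⟨m, m', by rwa [add_comm u, add_comm (P u)]⟩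
  induction hd : v - u using Nat.strong_induction_on generalizing u v with
  | _ d ih =>
    by_cases hdL : d < L
    · exact ⟨u, v, huv, by omega, rfl, rfl⟩
    obtain ⟨k, hk0, hkd, hk⟩ := hP u (v - u) (by omega)
    rw [Nat.add_sub_cancel' huv] at hk
    rcases le_total (u + k) (u + (v - u - k)) with hle | hle
    · obtain ⟨m, m', h1, h2, h3, h4⟩ := ih _ (by omega) _ _ hle rfl
      exact ⟨m, m', h1, h2, by omega, h4.trans hk⟩
    · obtain ⟨m, m', h1, h2, h3, h4⟩ := ih _ (by omega) _ _ hle rfl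
      exact ⟨m, m', h1, h2, by omega, h4.trans (by rw [add_comm, hk])⟩

lemma abs_add_sub_add_le_of_close_pairs {f : ℕ → ℤ} {L : ℕ}
    (hf : ∀ p q, |f p - f q| ≤ |(p : ℤ) - q|)
    (hpair : ∀ u v, ∃ m m', m ≤ m' ∧ m' < m + L ∧ m + m' = u + v ∧ f m + f m' = f u + f v)
    {u v u' v' : ℕ} (h : u + v = u' + v') :
    |f u + f v - (f u' + f v')| ≤ L := by
  obtain ⟨m₁, m₁', h₁, h₁', hs₁, hf₁⟩ := hpair u v
  obtain ⟨m₂, m₂', h₂, h₂', hs₂, hf₂⟩ := hpair u' v'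
  -- both pairs straddle the midpoint of the same antidiagonal
  have hclose : |(m₁ : ℤ) - m₂| + |(m₁' : ℤ) - m₂'| ≤ L := by
    rcases abs_cases ((m₁ : ℤ) - m₂) with ⟨h₃, -⟩ | ⟨h₃, -⟩ <;>
    rcases abs_cases ((m₁' : ℤ) - m₂') with ⟨h₄, -⟩ | ⟨h₄, -⟩ <;> omega
  calc |f u + f v - (f u' + f v')| = |(f m₁ - f m₂) + (f m₁' - f m₂')| := by
        rw [← hf₁, ← hf₂]; ring_nf
    _ ≤ |f m₁ - f m₂| + |f m₁' - f m₂'| := abs_add_le _ _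
    _ ≤ L := (add_le_add (hf _ _) (hf _ _)).trans hclose

lemma abs_count_factor_sub_le [DecidableEq α] {x : ℕ → α} {L : ℕ}
    (hP : ∀ i n, L ≤ n → ∃ k, 0 < k ∧ k < n ∧ prefixMultiset x (i + k) +
      prefixMultiset x (i + (n - k)) = prefixMultiset x i + prefixMultiset x (i + n))
    (a : α) (i j n : ℕ) :
    |((factor x i n).count a : ℤ) - (factor x j n).count a| ≤ L := by
  set f : ℕ → ℤ := fun m => (prefixMultiset x m).count a
  have hcount : ∀ i n, ((factor x i n).count a : ℤ) = f (i + n) - f i := by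
    intro i n
    simp only [f, prefixMultiset_add, Multiset.count_add, Multiset.coe_count]
    push_cast; ring
  have hf : ∀ p q, |f p - f q| ≤ |(p : ℤ) - q| := by
    intro p q
    wlog hpq : p ≤ q generalizing p q
    · rw [abs_sub_comm, abs_sub_comm (p : ℤ)]; exact this q p (by omega)
    have hle := List.count_le_length (a := a) (l := factor x p (q - p))
    have hfq := hcount p (q - p)
    rw [factor_length] at hle
    rw [Nat.add_sub_cancel' hpq] at hfq
    rw [abs_sub_comm, abs_sub_comm (p : ℤ), abs_of_nonneg (by omega), abs_of_nonneg (by omega)]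
    omega
  have hpair : ∀ u v, ∃ m m', m ≤ m' ∧ m' < m + L ∧ m + m' = u + v ∧ f m + f m' = f u + f v := by
    intro u v
    obtain ⟨m, m', h₁, h₂, h₃, h₄⟩ := exists_close_pair_add_eq hP u v
    refine ⟨m, m', h₁, h₂, h₃, ?_⟩
    have := congrArg (Multiset.count a) h₄
    simp only [Multiset.count_add] at this
    simp only [f]; exact_mod_cast this
  rw [hcount, hcount]
  calc |f (i + n) - f i - (f (j + n) - f j)| = |f (i + n) + f j - (f i + f (j + n))| := by
        ring_nf
    _ ≤ L := abs_add_sub_add_le_of_close_pairs hf hpair (by ring)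

lemma finite_and_ncard_le_of_forall_abs_sub_le [Fintype α] {S : Set (α → ℕ)}
    (c : α → ℕ) (r : ℕ) (hS : ∀ f ∈ S, ∀ a, |(f a : ℤ) - c a| ≤ r) :
    S.Finite ∧ S.ncard ≤ (2 * r + 1) ^ Fintype.card α := by
  classical
  set t := Fintype.piFinset fun a => Finset.Icc (c a - r) (c a + r)
  have hsub : S ⊆ t := by
    intro f hf
    rw [Finset.mem_coe, Fintype.mem_piFinset]
    intro a
    rw [Finset.mem_Icc]
    have := abs_le.mp (hS f hf a)
    omega
  refine ⟨t.finite_toSet.subset hsub, (Set.ncard_le_ncard hsub t.finite_toSet).trans ?_⟩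
  rw [Set.ncard_coe_finset, Fintype.card_piFinset]
  refine Finset.prod_le_pow_card _ _ _ fun a _ => ?_
  rw [Nat.card_Icc]
  omega
end

/-- A word with finitely many abelian unbordered factors has bounded abelian complexity. -/
theorem stmt_18 {α : Type*} [DecidableEq α] [Fintype α] (x : ℕ → α)
    (h : {u : List α | IsFactor u x ∧ ¬ AbelianBordered u}.Finite) :
    ∃ N : ℕ, ∀ n : ℕ, 1 ≤ n →
      (ParikhVectors x n).Finite ∧ (ParikhVectors x n).ncard ≤ N := by
  obtain ⟨L, hL⟩ := exists_forall_abelianBordered_factor h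
  have hbal := abs_count_factor_sub_le
    fun i n hn => exists_prefixMultiset_add_eq_of_abelianBordered (hL i n hn)
  refine ⟨(2 * L + 1) ^ Fintype.card α, fun n _ => ?_⟩
  refine finite_and_ncard_le_of_forall_abs_sub_le (fun a => (factor x 0 n).count a) L ?_
  rintro f ⟨u, ⟨i, hu⟩, rfl, hf⟩ a
  rw [← hf a]
  simpa only [hu] using hbal a i 0 u.length
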